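/- arXiv:1810.08602 — 2 statements merged into one kernel-verified Lean document; each statement's English description precedes it below -/
import Mathlib

section
/- A directed graph E satisfying Condition (K) satisfies Condition (L): if every vertex lying on some closed simple path is the base of at least two distinct closed simple paths, then every cycle in E has an exit. -/
variable {V E : Type*}

/-- A list of edges is a path when consecutive edges are composable. -/
def IsEdgePath (s r : E → V) (l : List E) : Prop :=
  l.Chain' (fun e f => r e = s f)

/-- A closed path based at `v`: a nonempty path starting and ending at `v`. -/
def IsClosedPath (s r : E → V) (v : V) (l : List E) : Prop :=
  l ≠ [] ∧ IsEdgePath s r l ∧ (l.map s).head? = some v ∧ (l.map r).getLast? = some v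

/-- A closed simple path based at `v`: a closed path with `s(e_j) ≠ v` for every `j > 0`. -/
def IsClosedSimplePath (s r : E → V) (v : V) (l : List E) : Prop :=
  IsClosedPath s r v l ∧ ∀ j (hj : j < l.length), 0 < j → s (l.get ⟨j, hj⟩) ≠ v

/-- A cycle based at `v`: a closed path whose edges have pairwise distinct sources. -/
def IsCycle (s r : E → V) (v : V) (l : List E) : Prop :=
  IsClosedPath s r v l ∧
    ∀ i j (hi : i < l.length) (hj : j < l.length), i ≠ j →
      s (l.get ⟨i, hi⟩) ≠ s (l.get ⟨j, hj⟩)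

/-- A path has an exit: some edge `f` shares its source with an edge of the path but
differs from it. -/
def HasExit (s : E → V) (l : List E) : Prop :=
  ∃ f : E, ∃ (i : ℕ) (hi : i < l.length), s f = s (l.get ⟨i, hi⟩) ∧ f ≠ l.get ⟨i, hi⟩

/-- Condition (K): every vertex which is the base of a closed simple path is the base of
at least two distinct closed simple paths. -/
def ConditionK (s r : E → V) : Prop :=
  ∀ v : V, (∃ l, IsClosedSimplePath s r v l) →
    ∃ l₁ l₂, IsClosedSimplePath s r v l₁ ∧ IsClosedSimplePath s r v l₂ ∧ l₁ ≠ l₂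

/-- Condition (L): every cycle has an exit. -/
def ConditionL (s r : E → V) : Prop :=
  ∀ (v : V) (l : List E), IsCycle s r v l → HasExit s l

lemma head_src {s r : E → V} {v : V} {l : List E} (h : IsClosedPath s r v l)
    (h0 : 0 < l.length) : s (l.get ⟨0, h0⟩) = v := by
  obtain ⟨hnil, -, hhead, -⟩ := h
  cases l with
  | nil => exact absurd rfl hnil
  | cons a t => simpa using hhead

lemma last_rng {s r : E → V} {v : V} {l : List E} (h : IsClosedPath s r v l)
    (h0 : l.length - 1 < l.length) : r (l.get ⟨l.length - 1, h0⟩) = v := by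
  obtain ⟨hnil, -, -, hlast⟩ := h
  rw [List.getLast?_eq_getLast_of_ne_nil (by simpa using hnil),
    List.getLast_eq_getElem] at hlast
  simp only [List.getElem_map, List.length_map, Option.some.injEq] at hlast
  simpa using hlast

lemma chain_step {s r : E → V} {l : List E} (h : IsEdgePath s r l)
    {i : ℕ} (hi : i + 1 < l.length) :
    r (l.get ⟨i, Nat.lt_of_succ_lt hi⟩) = s (l.get ⟨i + 1, hi⟩) :=
  List.isChain_iff_getElem.mp h i (by omega)

/-- A directed graph satisfying Condition (K) satisfies Condition (L). -/
theorem conditionK_implies_conditionL (s r : E → V) (hK : ConditionK s r) :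
    ConditionL s r := by
  intro v l hcyc
  by_contra hne
  have noexit : ∀ (f : E) (i : ℕ) (hi : i < l.length),
      s f = s (l.get ⟨i, hi⟩) → f = l.get ⟨i, hi⟩ := by
    intro f i hi hsf
    by_contra hne'
    exact hne ⟨f, i, hi, hsf, hne'⟩
  obtain ⟨hcp, hdist⟩ := hcyc
  have hnil := hcp.1
  have hchain := hcp.2.1
  have hlen : 0 < l.length := List.length_pos_iff.2 hnil
  have hsv : s (l.get ⟨0, hlen⟩) = v := head_src hcp hlen
  have hsimple : IsClosedSimplePath s r v l := by
    refine ⟨hcp, fun j hj hj0 => ?_⟩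
    rw [← hsv]
    exact hdist j 0 hj hlen (Nat.pos_iff_ne_zero.mp hj0)
  have key : ∀ m, IsClosedSimplePath s r v m → m = l := by
    intro m ⟨mcp, msimp⟩
    have mnil := mcp.1
    have mchain := mcp.2.1
    have mlen : 0 < m.length := List.length_pos_iff.2 mnil
    have prefix_eq : ∀ i (hi : i < m.length) (hi' : i < l.length),
        m.get ⟨i, hi⟩ = l.get ⟨i, hi'⟩ := by
      intro i
      induction i with
      | zero =>
        intro hi hi'
        apply noexit
        rw [head_src mcp hi]
        exact (head_src hcp hi').symm
      | succ i ih =>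
        intro hi hi'
        apply noexit
        rw [← chain_step mchain hi, ← chain_step hchain hi',
          ih (Nat.lt_of_succ_lt hi) (Nat.lt_of_succ_lt hi')]
    have hlength : m.length = l.length := by
      rcases lt_trichotomy m.length l.length with hlt | heq | hgt
      · exfalso
        set k := m.length with hk
        have hk1 : k - 1 < m.length := Nat.sub_lt mlen Nat.one_pos
        have hk1' : k - 1 < l.length := lt_trans hk1 hlt
        have hstep : (k - 1) + 1 < l.length := by omega
        have e1 : r (l.get ⟨k - 1, hk1'⟩) = s (l.get ⟨(k - 1) + 1, hstep⟩) :=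
          chain_step hchain hstep
        have e2 : r (m.get ⟨k - 1, hk1⟩) = v := last_rng mcp hk1
        rw [prefix_eq (k - 1) hk1 hk1'] at e2
        have hkl : k < l.length := hlt
        have hfin : (⟨(k - 1) + 1, hstep⟩ : Fin l.length) = ⟨k, hkl⟩ :=
          Fin.ext (show (k - 1) + 1 = k by omega)
        rw [e2, hfin] at e1
        exact hdist k 0 hkl hlen (Nat.pos_iff_ne_zero.mp mlen) (e1.symm.trans hsv.symm)
      · exact heq
      · exfalso
        set k := l.length with hk
        have hk1 : k - 1 < l.length := Nat.sub_lt hlen Nat.one_pos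
        have hk1m : k - 1 < m.length := by omega
        have hstep : (k - 1) + 1 < m.length := by omega
        have e1 : r (m.get ⟨k - 1, hk1m⟩) = s (m.get ⟨(k - 1) + 1, hstep⟩) :=
          chain_step mchain hstep
        have e2 : r (l.get ⟨k - 1, hk1⟩) = v := last_rng hcp hk1
        rw [prefix_eq (k - 1) hk1m hk1, e2] at e1
        have hkm : k < m.length := hgt
        have hfin : (⟨(k - 1) + 1, hstep⟩ : Fin m.length) = ⟨k, hkm⟩ :=
          Fin.ext (show (k - 1) + 1 = k by omega)
        rw [hfin] at e1
        exact msimp k hkm hlen e1.symm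
    exact List.ext_get hlength fun i hi hi' => prefix_eq i hi hi'
  obtain ⟨l₁, l₂, h1, h2, hne12⟩ := hK v ⟨l, hsimple⟩
  exact hne12 ((key l₁ h1).trans (key l₂ h2).symm)
end

section
/- Let E be a directed graph and H a hereditary and saturated subset of E⁰. If K is a hereditary saturated subset of the quotient graph E/H (whose vertex set is E⁰ \ H), then K ∪ H is a hereditary saturated subset of E containing H; this gives an inclusion-preserving bijection between hereditary saturated subsets of E/H and hereditary saturated subsets of E containing H, in the case that E is row-finite. -/
/-- The one-step adjacency relation of the directed graph `(V, E, s, r)`. -/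
def GraphStep {V E : Type*} (s r : E → V) (v w : V) : Prop := ∃ e : E, s e = v ∧ r e = w

/-- Path-reachability: `v ≥ w` iff there is a (possibly trivial) directed path from `v` to `w`. -/
def GraphReach {V E : Type*} (s r : E → V) : V → V → Prop :=
  Relation.ReflTransGen (GraphStep s r)

/-- `H` is hereditary: if `v ∈ H` and `v ≥ w` then `w ∈ H`. -/
def GraphHereditary {V E : Type*} (s r : E → V) (H : Set V) : Prop :=
  ∀ v w : V, v ∈ H → GraphReach s r v w → w ∈ H

/-- `v` is a regular vertex: it emits finitely many, but at least one, edges. -/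
def GraphRegular {V E : Type*} (s : E → V) (v : V) : Prop :=
  {e : E | s e = v}.Finite ∧ {e : E | s e = v}.Nonempty

/-- `H` is saturated: every regular vertex all of whose out-edge ranges lie in `H` is in `H`. -/
def GraphSaturated {V E : Type*} (s r : E → V) (H : Set V) : Prop :=
  ∀ v : V, GraphRegular s v → (∀ e : E, s e = v → r e ∈ H) → v ∈ H

/-- `K ⊆ E⁰ \ H` is hereditary in the quotient graph `E/H`, whose edges are the
edges `e` of `E` with `r(e) ∉ H`. -/
def QuotHereditary {V E : Type*} (s r : E → V) (H K : Set V) : Prop :=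
  ∀ e : E, r e ∉ H → s e ∈ K → r e ∈ K

/-- `v ∈ E⁰ \ H` is regular in the quotient graph `E/H`. -/
def QuotRegular {V E : Type*} (s r : E → V) (H : Set V) (v : V) : Prop :=
  v ∉ H ∧ {e : E | s e = v ∧ r e ∉ H}.Finite ∧ {e : E | s e = v ∧ r e ∉ H}.Nonempty

/-- `K ⊆ E⁰ \ H` is saturated in the quotient graph `E/H`. -/
def QuotSaturated {V E : Type*} (s r : E → V) (H K : Set V) : Prop :=
  ∀ v : V, QuotRegular s r H v → (∀ e : E, s e = v → r e ∉ H → r e ∈ K) → v ∈ K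

private lemma quot_forward {V E : Type*} (s r : E → V)
    (hrow : ∀ v : V, {e : E | s e = v}.Finite) (H : Set V)
    (hHh : GraphHereditary s r H) (hHs : GraphSaturated s r H)
    (K : Set V) (hK : K ⊆ Hᶜ) (hKh : QuotHereditary s r H K)
    (hKs : QuotSaturated s r H K) :
    GraphHereditary s r (K ∪ H) ∧ GraphSaturated s r (K ∪ H) ∧ H ⊆ K ∪ H := by
  refine ⟨?_, ?_, fun v hv => Or.inr hv⟩
  · -- hereditary
    intro v w hv hreach
    induction hreach with
    | refl => exact hv
    | tail hbc hstep ih =>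
      obtain ⟨e, hse, hre⟩ := hstep
      rcases ih with hb | hb
      · by_cases hrH : r e ∈ H
        · exact Or.inr (hre ▸ hrH)
        · exact Or.inl (hre ▸ hKh e hrH (hse ▸ hb))
      · exact Or.inr (hHh _ _ hb (Relation.ReflTransGen.single ⟨e, hse, hre⟩))
  · -- saturated
    intro v hreg hall
    by_cases hvH : v ∈ H
    · exact Or.inr hvH
    by_cases hallH : ∀ e : E, s e = v → r e ∈ H
    · exact Or.inr (hHs v hreg hallH)
    push_neg at hallH
    obtain ⟨e0, hs0, hr0⟩ := hallH
    refine Or.inl (hKs v ⟨hvH, (hrow v).subset (fun e he => he.1), ⟨e0, hs0, hr0⟩⟩ ?_)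
    intro e hse hreH
    rcases hall e hse with h | h
    · exact h
    · exact absurd h hreH

/-- For a row-finite graph `E` and a hereditary saturated `H ⊆ E⁰`, the map `K ↦ K ∪ H`
sends hereditary saturated subsets of the quotient graph `E/H` to hereditary saturated
subsets of `E` containing `H`, and gives an inclusion-preserving bijection between the
two collections. -/
theorem quotient_hereditarySaturated_correspondence {V E : Type*} (s r : E → V)
    (hrow : ∀ v : V, {e : E | s e = v}.Finite) (H : Set V)
    (hHh : GraphHereditary s r H) (hHs : GraphSaturated s r H) :
    (∀ K : Set V, K ⊆ Hᶜ → QuotHereditary s r H K → QuotSaturated s r H K →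
        GraphHereditary s r (K ∪ H) ∧ GraphSaturated s r (K ∪ H) ∧ H ⊆ K ∪ H) ∧
    Set.BijOn (fun K : Set V => K ∪ H)
      {K : Set V | K ⊆ Hᶜ ∧ QuotHereditary s r H K ∧ QuotSaturated s r H K}
      {H' : Set V | GraphHereditary s r H' ∧ GraphSaturated s r H' ∧ H ⊆ H'} ∧
    (∀ K₁ K₂ : Set V,
        K₁ ∈ {K : Set V | K ⊆ Hᶜ ∧ QuotHereditary s r H K ∧ QuotSaturated s r H K} →
        K₂ ∈ {K : Set V | K ⊆ Hᶜ ∧ QuotHereditary s r H K ∧ QuotSaturated s r H K} →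
        (K₁ ⊆ K₂ ↔ K₁ ∪ H ⊆ K₂ ∪ H)) := by
  have fwd := quot_forward s r hrow H hHh hHs
  refine ⟨fun K h1 h2 h3 => fwd K h1 h2 h3, ⟨?_, ?_, ?_⟩, ?_⟩
  · -- MapsTo
    rintro K ⟨h1, h2, h3⟩
    exact fwd K h1 h2 h3
  · -- InjOn
    rintro K₁ ⟨h1, _, _⟩ K₂ ⟨h2, _, _⟩ heq
    simp only at heq
    ext v
    constructor
    · intro hv
      have : v ∈ K₂ ∪ H := heq ▸ Or.inl hv
      rcases this with h | h
      · exact h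
      · exact absurd h (h1 hv)
    · intro hv
      have : v ∈ K₁ ∪ H := heq ▸ Or.inl hv
      rcases this with h | h
      · exact h
      · exact absurd h (h2 hv)
  · -- SurjOn
    rintro H' ⟨hH'h, hH's, hHH'⟩
    refine ⟨H' \ H, ⟨fun v hv => hv.2, ?_, ?_⟩, ?_⟩
    · intro e hre hse
      exact ⟨hH'h _ _ hse.1 (Relation.ReflTransGen.single ⟨e, rfl, rfl⟩), hre⟩
    · intro v ⟨hvH, _, ⟨e0, hs0, _⟩⟩ hall
      refine ⟨hH's v ⟨hrow v, ⟨e0, hs0⟩⟩ ?_, hvH⟩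
      intro e hse
      by_cases hrH : r e ∈ H
      · exact hHH' hrH
      · exact (hall e hse hrH).1
    · simp only [Set.diff_union_self, Set.union_eq_left]
      exact hHH'
  · -- inclusion-preserving
    rintro K₁ K₂ ⟨h1, _, _⟩ ⟨h2, _, _⟩
    constructor
    · exact fun h => Set.union_subset_union_left H h
    · intro h v hv
      rcases h (Or.inl hv) with h' | h'
      · exact h'
      · exact absurd h' (h1 hv)
end
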